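/- arXiv:2603.01994 — 5 statements merged into one kernel-verified Lean document; each statement's English description precedes it below -/
import Mathlib

section
/- For all real $y$, the function $G(y) = \log\cosh(y) - y^2/2$ satisfies $-y^4/12 \le G(y) \le 0$. -/
open Real

private lemma sinh_le_mul_cosh {y : ℝ} (hy : 0 ≤ y) : Real.sinh y ≤ y * Real.cosh y := by
  have hmono : MonotoneOn (fun x : ℝ => x * Real.cosh x - Real.sinh x) (Set.Ici 0) := by
    apply monotoneOn_of_deriv_nonneg (convex_Ici 0)
    · fun_prop
    · fun_prop
    · intro x hx
      have hd : HasDerivAt (fun x : ℝ => x * Real.cosh x - Real.sinh x)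
          (1 * Real.cosh x + x * Real.sinh x - Real.cosh x) x :=
        ((hasDerivAt_id x).mul (Real.hasDerivAt_cosh x)).sub (Real.hasDerivAt_sinh x)
      rw [hd.deriv]
      have hx0 : (0:ℝ) ≤ x := le_of_lt (by simpa using hx)
      nlinarith [Real.sinh_nonneg_iff.2 hx0]
  have := hmono (Set.self_mem_Ici) (Set.mem_Ici.2 hy) hy
  simpa using this

private lemma mul_cosh_le_sinh {y : ℝ} (hy : 0 ≤ y) :
    (y - y ^ 3 / 3) * Real.cosh y ≤ Real.sinh y := by
  have hmono : MonotoneOn (fun x : ℝ => Real.sinh x - (x - x ^ 3 / 3) * Real.cosh x)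
      (Set.Ici 0) := by
    apply monotoneOn_of_deriv_nonneg (convex_Ici 0)
    · fun_prop
    · fun_prop
    · intro x hx
      have hd : HasDerivAt (fun x : ℝ => Real.sinh x - (x - x ^ 3 / 3) * Real.cosh x)
          (Real.cosh x - ((1 - 3 * x ^ 2 / 3) * Real.cosh x + (x - x ^ 3 / 3) * Real.sinh x)) x := by
        exact (Real.hasDerivAt_sinh x).sub
          ((((hasDerivAt_id x).sub (((hasDerivAt_pow 3 x).div_const 3))).mul
            (Real.hasDerivAt_cosh x)))
      rw [hd.deriv]
      have hx0 : (0:ℝ) ≤ x := le_of_lt (by simpa using hx)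
      have h1 := sinh_le_mul_cosh hx0
      have h2 := Real.sinh_nonneg_iff.2 hx0
      have h3 := Real.cosh_pos x
      -- need: x^2 cosh x - (x - x^3/3) sinh x ≥ 0
      rcases le_or_gt (x - x ^ 3 / 3) 0 with h | h
      · nlinarith
      · nlinarith [mul_le_mul_of_nonneg_left h1 h.le, mul_nonneg (pow_nonneg hx0 4) h3.le]
  have := hmono (Set.self_mem_Ici) (Set.mem_Ici.2 hy) hy
  simp only [Real.sinh_zero, Real.cosh_zero] at this
  nlinarith [this]

private lemma log_cosh_bounds {y : ℝ} (hy : 0 ≤ y) :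
    y ^ 2 / 2 - y ^ 4 / 12 ≤ Real.log (Real.cosh y) ∧ Real.log (Real.cosh y) ≤ y ^ 2 / 2 := by
  have hcosh : ∀ x : ℝ, Real.cosh x ≠ 0 := fun x => (Real.cosh_pos x).ne'
  have hdlog : ∀ x : ℝ, HasDerivAt (fun t => Real.log (Real.cosh t)) (Real.sinh x / Real.cosh x) x :=
    fun x => (Real.hasDerivAt_cosh x).log (hcosh x)
  constructor
  · have hmono : MonotoneOn (fun x : ℝ => Real.log (Real.cosh x) - (x ^ 2 / 2 - x ^ 4 / 12))
        (Set.Ici 0) := by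
      apply monotoneOn_of_deriv_nonneg (convex_Ici 0)
      · apply ContinuousOn.sub _ (by fun_prop)
        exact (Real.continuous_cosh.log (fun x => hcosh x)).continuousOn
      · intro x hx
        exact ((hdlog x).sub (((hasDerivAt_pow 2 x).div_const 2).sub
          ((hasDerivAt_pow 4 x).div_const 12))).differentiableAt.differentiableWithinAt
      · intro x hx
        have hd : HasDerivAt (fun x : ℝ => Real.log (Real.cosh x) - (x ^ 2 / 2 - x ^ 4 / 12)) _ x := (hdlog x).sub (((hasDerivAt_pow 2 x).div_const 2).sub
          ((hasDerivAt_pow 4 x).div_const 12))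
        rw [hd.deriv]
        have hx0 : (0:ℝ) ≤ x := le_of_lt (by simpa using hx)
        have h2 := mul_cosh_le_sinh hx0
        have h3 := Real.cosh_pos x
        rw [sub_nonneg]; rw [show ((2:ℕ):ℝ) * x ^ (2 - 1) / 2 - ((4:ℕ):ℝ) * x ^ (4 - 1) / 12 = x - x ^ 3 / 3 by push_cast; ring, le_div_iff₀ h3]
        nlinarith
    have := hmono (Set.self_mem_Ici) (Set.mem_Ici.2 hy) hy
    simp only [Real.cosh_zero, Real.log_one] at this
    nlinarith [this]
  · have hmono : MonotoneOn (fun x : ℝ => x ^ 2 / 2 - Real.log (Real.cosh x)) (Set.Ici 0) := by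
      apply monotoneOn_of_deriv_nonneg (convex_Ici 0)
      · apply ContinuousOn.sub (by fun_prop)
        exact (Real.continuous_cosh.log (fun x => hcosh x)).continuousOn
      · intro x hx
        exact (((hasDerivAt_pow 2 x).div_const 2).sub (hdlog x)).differentiableAt.differentiableWithinAt
      · intro x hx
        have hd : HasDerivAt (fun x : ℝ => x ^ 2 / 2 - Real.log (Real.cosh x)) _ x := ((hasDerivAt_pow 2 x).div_const 2).sub (hdlog x)
        rw [hd.deriv]
        have hx0 : (0:ℝ) ≤ x := le_of_lt (by simpa using hx)
        have h1 := sinh_le_mul_cosh hx0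
        have h3 := Real.cosh_pos x
        rw [sub_nonneg]; rw [show ((2:ℕ):ℝ) * x ^ (2 - 1) / 2 = x by push_cast; ring, div_le_iff₀ h3]
        nlinarith
    have := hmono (Set.self_mem_Ici) (Set.mem_Ici.2 hy) hy
    simp only [Real.cosh_zero, Real.log_one] at this
    nlinarith [this]

/-- For all real `y`, `G(y) = log cosh y - y²/2` satisfies `-y⁴/12 ≤ G(y) ≤ 0`. -/
theorem stmt_2 (G : ℝ → ℝ) (hG : ∀ y, G y = Real.log (Real.cosh y) - y ^ 2 / 2) :
    ∀ y : ℝ, -(y ^ 4) / 12 ≤ G y ∧ G y ≤ 0 := by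
  intro y
  rw [hG]
  rcases le_or_gt 0 y with hy | hy
  · obtain ⟨h1, h2⟩ := log_cosh_bounds hy
    constructor <;> nlinarith
  · obtain ⟨h1, h2⟩ := log_cosh_bounds (neg_nonneg.2 hy.le)
    rw [Real.cosh_neg] at h1 h2
    constructor <;> nlinarith
end

section
/- The Hessian of $\varphi(x) = \frac{1}{2}x^TAx - \sum_k \log\cosh((Ax)_k)$ at $x = 0$ equals $A - A^2$, and for the cyclic nearest-neighbor matrix $A$ with parameters $\beta > 2\alpha > 0$, it is positive definite if $\beta + 2\alpha < 1$, positive semi-definite if $\beta + 2\alpha = 1$, and not positive semi-definite if $\beta + 2\alpha > 1$. -/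
open Matrix

/-- The symmetric circulant matrix with diagonal `β`, cyclic nearest-neighbor entries `α`. -/
def cyc (s : ℕ) (α β : ℝ) : Matrix (Fin s) (Fin s) ℝ :=
  Matrix.of fun i j =>
    if i = j then β
    else if ((i : ℤ) - (j : ℤ)).natAbs = 1 ∨ ((i : ℤ) - (j : ℤ)).natAbs = s - 1 then α
    else 0

section Aux

lemma fin_cond_iff (s : ℕ) (hs : 3 ≤ s) (i j : Fin s) :
    haveI : NeZero s := ⟨by omega⟩
    ((((i : ℤ) - (j : ℤ)).natAbs = 1 ∨ ((i : ℤ) - (j : ℤ)).natAbs = s - 1) ↔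
      (j = i + 1 ∨ j = i - 1)) := by
  haveI : NeZero s := ⟨by omega⟩
  have hi := i.isLt
  have hj := j.isLt
  have hone : (1 : ℕ) % s = 1 := Nat.mod_eq_of_lt (by omega)
  have h1' : ((i + 1 : Fin s) : ℕ) = if i.val + 1 = s then 0 else i.val + 1 := by
    rw [Fin.val_add, Fin.val_one', hone]
    split_ifs with h
    · simp [h]
    · exact Nat.mod_eq_of_lt (by omega)
  have h2' : ((i - 1 : Fin s) : ℕ) = if i.val = 0 then s - 1 else i.val - 1 := by
    rw [Fin.sub_def]
    simp only [Fin.val_mk, Fin.val_one', hone]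
    split_ifs with h
    · rw [h, Nat.add_zero]; exact Nat.mod_eq_of_lt (by omega)
    · rw [show s - 1 + i.val = s + (i.val - 1) by omega, Nat.add_mod_left]
      exact Nat.mod_eq_of_lt (by omega)
  rw [Fin.ext_iff, Fin.ext_iff, h1', h2']
  split_ifs <;> omega

section
variable {s : ℕ} (hs : 3 ≤ s) {α β : ℝ}

lemma cyc_apply' (i j : Fin s) :
    haveI : NeZero s := ⟨by omega⟩
    cyc s α β i j = if j = i then β else if j = i + 1 ∨ j = i - 1 then α else 0 := by
  haveI : NeZero s := ⟨by omega⟩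
  rcases eq_or_ne i j with rfl | h
  · simp [cyc]
  · rw [cyc, Matrix.of_apply, if_neg h, if_neg (Ne.symm h)]
    rcases Classical.em (j = i + 1 ∨ j = i - 1) with hc | hc
    · rw [if_pos ((fin_cond_iff s hs i j).2 hc), if_pos hc]
    · rw [if_neg (fun hx => hc ((fin_cond_iff s hs i j).1 hx)), if_neg hc]

lemma cyc_transpose : (cyc s α β)ᵀ = cyc s α β := by
  ext i j
  simp only [Matrix.transpose_apply, cyc, Matrix.of_apply]
  rw [show ((j:ℤ) - (i:ℤ)).natAbs = ((i:ℤ) - (j:ℤ)).natAbs by omega]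
  rcases eq_or_ne i j with rfl | h
  · rfl
  · rw [if_neg h, if_neg (Ne.symm h)]

lemma fin_distinct (i : Fin s) :
    haveI : NeZero s := ⟨by omega⟩
    (i + 1 ≠ i ∧ i - 1 ≠ i ∧ i + 1 ≠ i - 1) := by
  haveI : NeZero s := ⟨by omega⟩
  have h1 : ¬(((i : ℤ) - ((i : Fin s) : ℤ)).natAbs = 1 ∨ ((i : ℤ) - ((i : Fin s) : ℤ)).natAbs = s - 1) := by
    simp only [sub_self, Int.natAbs_zero]; omega
  have h2 := (fin_cond_iff s hs i i).2
  have hne1 : i + 1 ≠ i := fun h => h1 (h2 (Or.inl h.symm))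
  have hne2 : i - 1 ≠ i := fun h => h1 (h2 (Or.inr h.symm))
  refine ⟨hne1, hne2, fun h => ?_⟩
  -- i + 1 = i - 1 → 2 = 0 in Fin s
  have : ((i + 1 : Fin s) : ℕ) = ((i - 1 : Fin s) : ℕ) := by rw [h]
  have hi := i.isLt
  have hone : (1 : ℕ) % s = 1 := Nat.mod_eq_of_lt (by omega)
  rw [Fin.val_add, Fin.val_one', hone, Fin.sub_def] at this
  simp only [Fin.val_mk, Fin.val_one', hone] at this
  rcases Nat.lt_or_ge (i.val + 1) s with hlt | hge
  · rw [Nat.mod_eq_of_lt hlt] at this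
    rcases Nat.eq_zero_or_pos i.val with h0 | hp
    · rw [h0] at this
      rw [Nat.mod_eq_of_lt (by omega)] at this
      omega
    · rw [show s - 1 + i.val = s + (i.val - 1) by omega, Nat.add_mod_left,
        Nat.mod_eq_of_lt (by omega)] at this
      omega
  · have hieq : i.val + 1 = s := by omega
    rw [hieq, Nat.mod_self] at this
    rw [show s - 1 + i.val = s + (i.val - 1) by omega, Nat.add_mod_left,
      Nat.mod_eq_of_lt (by omega)] at this
    omega

end

section
variable {s : ℕ} (hs : 3 ≤ s) {α β : ℝ}

lemma cyc_mulVec (x : Fin s → ℝ) (i : Fin s) :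
    haveI : NeZero s := ⟨by omega⟩
    ((cyc s α β) *ᵥ x) i = β * x i + α * (x (i + 1) + x (i - 1)) := by
  haveI : NeZero s := ⟨by omega⟩
  obtain ⟨d1, d2, d3⟩ := fin_distinct hs i
  have hsum : ((cyc s α β) *ᵥ x) i = ∑ j, cyc s α β i j * x j := rfl
  rw [hsum]
  rw [← Finset.sum_subset (Finset.subset_univ ({i, i+1, i-1} : Finset (Fin s)))]
  · rw [Finset.sum_insert (by simp [d1.symm, d2.symm]),
      Finset.sum_insert (by simp [d3]), Finset.sum_singleton]
    rw [cyc_apply' hs, cyc_apply' hs, cyc_apply' hs]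
    rw [if_pos rfl, if_neg d1, if_pos (Or.inl rfl), if_neg d2, if_pos (Or.inr rfl)]
    ring
  · intro j _ hj
    simp only [Finset.mem_insert, Finset.mem_singleton, not_or] at hj
    rw [cyc_apply' hs, if_neg hj.1, if_neg (by tauto), zero_mul]
end

section
variable {s : ℕ} (hs : 3 ≤ s) {α β : ℝ}

lemma cyc_quad (x : Fin s → ℝ) :
    haveI : NeZero s := ⟨by omega⟩
    x ⬝ᵥ ((cyc s α β) *ᵥ x) = β * ∑ i, x i ^ 2 + 2 * α * ∑ i, x i * x (i + 1) := by
  haveI : NeZero s := ⟨by omega⟩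
  have h1 : x ⬝ᵥ ((cyc s α β) *ᵥ x)
      = ∑ i, (β * x i ^ 2 + α * (x i * x (i + 1)) + α * (x i * x (i - 1))) := by
    rw [dotProduct]
    refine Finset.sum_congr rfl fun i _ => ?_
    rw [cyc_mulVec hs]; ring
  have h2 : ∑ i, x i * x (i - 1) = ∑ i, x i * x (i + 1) := by
    refine Fintype.sum_equiv (Equiv.subRight (1 : Fin s))
      (fun i => x i * x (i - 1)) (fun i => x i * x (i + 1)) fun j => ?_
    show x j * x (j - 1) = x (j - 1) * x (j - 1 + 1)
    rw [sub_add_cancel, mul_comm]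
  rw [h1, Finset.sum_add_distrib, Finset.sum_add_distrib, ← Finset.mul_sum,
    ← Finset.mul_sum, ← Finset.mul_sum, h2]
  ring

lemma shift_sq (x : Fin s → ℝ) :
    haveI : NeZero s := ⟨by omega⟩
    ∑ i, x i ^ 2 = ∑ i, x (i + 1) ^ 2 := by
  haveI : NeZero s := ⟨by omega⟩
  refine Fintype.sum_equiv (Equiv.subRight (1 : Fin s))
    (fun i => x i ^ 2) (fun i => x (i + 1) ^ 2) fun j => ?_
  show x j ^ 2 = x (j - 1 + 1) ^ 2
  rw [sub_add_cancel]

lemma cross_bound (x : Fin s → ℝ) :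
    haveI : NeZero s := ⟨by omega⟩
    |∑ i, x i * x (i + 1)| ≤ ∑ i, x i ^ 2 := by
  haveI : NeZero s := ⟨by omega⟩
  calc |∑ i, x i * x (i + 1)| ≤ ∑ i, |x i * x (i + 1)| := Finset.abs_sum_le_sum_abs _ _
    _ ≤ ∑ i, (x i ^ 2 + x (i + 1) ^ 2) / 2 := by
        refine Finset.sum_le_sum fun i _ => ?_
        rw [abs_mul]
        nlinarith [sq_nonneg (|x i| - |x (i + 1)|), sq_abs (x i), sq_abs (x (i + 1))]
    _ = ∑ i, x i ^ 2 := by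
        rw [← Finset.sum_div, Finset.sum_add_distrib, ← shift_sq hs]
        ring
end

section
variable {s : ℕ} (hs : 3 ≤ s) {α β : ℝ}

lemma sum_sq_pos {x : Fin s → ℝ} (hx : x ≠ 0) : 0 < ∑ i, x i ^ 2 := by
  obtain ⟨i, hi⟩ := Function.ne_iff.1 hx
  exact Finset.sum_pos' (fun j _ => sq_nonneg _)
    ⟨i, Finset.mem_univ i, lt_of_le_of_ne (sq_nonneg _) (Ne.symm (pow_ne_zero 2 hi))⟩

lemma star_pi_real (x : Fin s → ℝ) : star x = x := funext fun i => star_trivial _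

lemma cyc_isHermitian : (cyc s α β).IsHermitian := by
  have h := cyc_transpose (s := s) (α := α) (β := β)
  show (cyc s α β)ᴴ = cyc s α β
  ext i j
  rw [Matrix.conjTranspose_apply, star_trivial]
  rw [← Matrix.transpose_apply (cyc s α β) i j, h]

lemma cyc_posDef (hs : 3 ≤ s) (hα : 0 < α) (hβ : 2 * α < β) : (cyc s α β).PosDef := by
  refine .of_dotProduct_mulVec_pos cyc_isHermitian fun x hx => ?_
  rw [star_pi_real, cyc_quad hs]
  have hc := abs_le.1 (cross_bound hs x)
  have h2 := sum_sq_pos hx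
  nlinarith

lemma one_sub_cyc_quad (x : Fin s → ℝ) :
    x ⬝ᵥ ((1 - cyc s α β) *ᵥ x) = ∑ i, x i ^ 2 - x ⬝ᵥ (cyc s α β *ᵥ x) := by
  rw [Matrix.sub_mulVec, dotProduct_sub, Matrix.one_mulVec]
  congr 1
  simp [dotProduct, sq]

lemma one_sub_cyc_posSemidef (hs : 3 ≤ s) (hα : 0 < α) (h1 : β + 2 * α ≤ 1) :
    (1 - cyc s α β).PosSemidef := by
  refine .of_dotProduct_mulVec_nonneg (Matrix.isHermitian_one.sub cyc_isHermitian) fun x => ?_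
  rw [star_pi_real, one_sub_cyc_quad, cyc_quad hs]
  have hc := abs_le.1 (cross_bound hs x)
  have h2 : (0:ℝ) ≤ ∑ i, x i ^ 2 := Finset.sum_nonneg fun i _ => sq_nonneg _
  nlinarith

lemma one_sub_cyc_posDef (hs : 3 ≤ s) (hα : 0 < α) (h1 : β + 2 * α < 1) :
    (1 - cyc s α β).PosDef := by
  refine .of_dotProduct_mulVec_pos (Matrix.isHermitian_one.sub cyc_isHermitian) fun x hx => ?_
  rw [star_pi_real, one_sub_cyc_quad, cyc_quad hs]
  have hc := abs_le.1 (cross_bound hs x)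
  have h2 := sum_sq_pos hx
  nlinarith

end

section
variable {n : Type*} [Fintype n] [DecidableEq n]

lemma conjT_eq_transpose (M : Matrix n n ℝ) : Mᴴ = Mᵀ := by
  ext i j
  rw [Matrix.conjTranspose_apply, Matrix.transpose_apply, star_trivial]

lemma sub_sq_posSemidef {A : Matrix n n ℝ} (hA : A.PosSemidef)
    (hB : (1 - A).PosSemidef) : (A - A * A).PosSemidef := by
  obtain ⟨S, hmul, hherm⟩ : ∃ S : Matrix n n ℝ, S * S = A ∧ Sᴴ = S := by
    open scoped MatrixOrder in
    obtain ⟨X, hX, -, hXX⟩ := CFC.exists_sqrt_of_isSelfAdjoint_of_quasispectrumRestricts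
      hA.isHermitian (QuasispectrumRestricts.nnreal_of_nonneg hA.nonneg)
    exact ⟨X, hXX, hX⟩
  have h1 : S * A = A * S := by
    conv_lhs => rw [← hmul]
    conv_rhs => rw [← hmul]
    rw [mul_assoc]
  have key : A - A * A = S * (1 - A) * Sᴴ := by
    rw [hherm, Matrix.mul_sub, Matrix.mul_one, Matrix.sub_mul, hmul, h1, mul_assoc, hmul]
  rw [key]
  exact hB.mul_mul_conjTranspose_same _

lemma sub_sq_posDef {A : Matrix n n ℝ} (hA : A.PosDef)
    (hB : (1 - A).PosDef) : (A - A * A).PosDef := by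
  have hAp := hA.posSemidef
  obtain ⟨S, hmul, hherm⟩ : ∃ S : Matrix n n ℝ, S * S = A ∧ Sᴴ = S := by
    open scoped MatrixOrder in
    obtain ⟨X, hX, -, hXX⟩ := CFC.exists_sqrt_of_isSelfAdjoint_of_quasispectrumRestricts
      hAp.isHermitian (QuasispectrumRestricts.nnreal_of_nonneg hAp.nonneg)
    exact ⟨X, hXX, hX⟩
  have h1 : S * A = A * S := by
    conv_lhs => rw [← hmul]
    conv_rhs => rw [← hmul]
    rw [mul_assoc]
  have key : A - A * A = S * (1 - A) * S := by
    rw [Matrix.mul_sub, Matrix.mul_one, Matrix.sub_mul, hmul, h1, mul_assoc, hmul]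
  refine .of_dotProduct_mulVec_pos ?_ ?_
  · have := hB.posSemidef.mul_mul_conjTranspose_same S
    rw [hherm] at this
    rw [key]
    exact this.isHermitian
  · intro x hx
    rw [key]
    have hv : (S * (1 - A) * S) *ᵥ x = S *ᵥ ((1 - A) *ᵥ (S *ᵥ x)) := by
      rw [← Matrix.mulVec_mulVec, ← Matrix.mulVec_mulVec]
    have hST : Sᵀ = S := by rw [← conjT_eq_transpose, hherm]
    have hdot : ∀ w : n → ℝ, x ⬝ᵥ (S *ᵥ w) = (S *ᵥ x) ⬝ᵥ w := by
      intro w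
      rw [Matrix.dotProduct_mulVec]
      congr 1
      conv_lhs => rw [← hST]
      rw [Matrix.vecMul_transpose]
    rcases eq_or_ne (S *ᵥ x) 0 with h0 | h0
    · exfalso
      have hAx : A *ᵥ x = 0 := by
        rw [← hmul, ← Matrix.mulVec_mulVec, h0, Matrix.mulVec_zero]
      have := hA.dotProduct_mulVec_pos hx
      rw [hAx, dotProduct_zero] at this
      exact lt_irrefl _ this
    · have hpos := hB.dotProduct_mulVec_pos h0
      have hstar : ∀ y : n → ℝ, star y = y := fun y => funext fun i => star_trivial _
      rw [hstar] at hpos ⊢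
      rw [hv, hdot]
      exact hpos

end

section
variable {s : ℕ} {α β : ℝ}

lemma cyc_not_posSemidef (hs : 3 ≤ s) (hα : 0 < α) (h1 : 1 < β + 2 * α) :
    ¬ (cyc s α β - cyc s α β * cyc s α β).PosSemidef := by
  intro h
  haveI : NeZero s := ⟨by omega⟩
  set A := cyc s α β with hA
  set c : ℝ := β + 2 * α with hc
  have hone : A *ᵥ (fun _ => (1 : ℝ)) = fun _ => c := funext fun i => by
    rw [hA, cyc_mulVec hs]; ring
  have hconst : (fun _ : Fin s => c) = c • (fun _ => (1 : ℝ)) := by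
    funext i; simp
  have h2 : (A * A) *ᵥ (fun _ => (1 : ℝ)) = fun _ => c * c := by
    rw [← Matrix.mulVec_mulVec, hone, hconst, Matrix.mulVec_smul, hone]
    funext i; simp
  have h3 := h.dotProduct_mulVec_nonneg (fun _ => (1 : ℝ))
  rw [star_pi_real, Matrix.sub_mulVec, hone, h2] at h3
  have h4 : (fun _ : Fin s => (1:ℝ)) ⬝ᵥ ((fun _ => c) - fun _ => c * c)
      = (s : ℝ) * (c - c * c) := by
    simp [dotProduct, Finset.sum_sub_distrib, mul_comm]; ring
  rw [h4] at h3
  have hs' : (3 : ℝ) ≤ (s : ℝ) := by exact_mod_cast hs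
  have hneg : c - c * c < 0 := by nlinarith
  nlinarith [mul_lt_mul_of_pos_left hneg (show (0:ℝ) < (s:ℝ) by linarith)]
end


section
variable {s : ℕ} (A : Matrix (Fin s) (Fin s) ℝ)

noncomputable def amk (k : Fin s) : EuclideanSpace ℝ (Fin s) →L[ℝ] ℝ :=
  LinearMap.toContinuousLinearMap
    { toFun := fun x => (A *ᵥ (x : Fin s → ℝ)) k
      map_add' := fun x y => by
        show (A *ᵥ (x + y : Fin s → ℝ)) k = (A *ᵥ (x : Fin s → ℝ)) k + (A *ᵥ (y : Fin s → ℝ)) k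
        rw [Matrix.mulVec_add]; rfl
      map_smul' := fun c x => by
        show (A *ᵥ (c • x : Fin s → ℝ)) k = c • (A *ᵥ (x : Fin s → ℝ)) k
        rw [Matrix.mulVec_smul]; rfl }

lemma amk_coe (k : Fin s) : ⇑(amk A k) = fun x : EuclideanSpace ℝ (Fin s) => (A *ᵥ (x : Fin s → ℝ)) k := rfl

lemma amk_apply (k : Fin s) (x : EuclideanSpace ℝ (Fin s)) : amk A k x = (A *ᵥ (x : Fin s → ℝ)) k := rfl

noncomputable def Dphi (x : EuclideanSpace ℝ (Fin s)) : EuclideanSpace ℝ (Fin s) →L[ℝ] ℝ :=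
  ∑ k, ((1 / 2 : ℝ) • (x k • amk A k + (A *ᵥ (x : Fin s → ℝ)) k • EuclideanSpace.proj k)
      - Real.tanh ((A *ᵥ (x : Fin s → ℝ)) k) • amk A k)

lemma logcosh_hasDerivAt (t : ℝ) :
    HasDerivAt (fun u => Real.log (Real.cosh u)) (Real.tanh t) t := by
  have h := (Real.hasDerivAt_log (Real.cosh_pos t).ne').comp t (Real.hasDerivAt_cosh t)
  have : Real.tanh t = (Real.cosh t)⁻¹ * Real.sinh t := by
    rw [Real.tanh_eq_sinh_div_cosh, div_eq_inv_mul]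
  rw [this]
  exact h

lemma tanh_hasDerivAt_zero : HasDerivAt Real.tanh 1 0 := by
  have h := (Real.hasDerivAt_sinh 0).div (Real.hasDerivAt_cosh 0) (Real.cosh_pos 0).ne'
  have hf : (Real.sinh / Real.cosh) = Real.tanh := by
    funext t; rw [Pi.div_apply, Real.tanh_eq_sinh_div_cosh]
  rw [hf] at h
  refine h.congr_deriv ?_
  rw [Real.cosh_zero, Real.sinh_zero]
  norm_num

lemma phi_hasFDerivAt (φ : EuclideanSpace ℝ (Fin s) → ℝ)
    (hφ : ∀ x : EuclideanSpace ℝ (Fin s),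
      φ x = (1 / 2) * ((x : Fin s → ℝ) ⬝ᵥ A.mulVec x)
        - ∑ k, Real.log (Real.cosh (A.mulVec x k)))
    (x : EuclideanSpace ℝ (Fin s)) : HasFDerivAt φ (Dphi A x) x := by
  have hrw : φ = fun y : EuclideanSpace ℝ (Fin s) =>
      ∑ k, ((1 / 2) * (y k * (A *ᵥ (y : Fin s → ℝ)) k)
        - Real.log (Real.cosh ((A *ᵥ (y : Fin s → ℝ)) k))) := by
    funext y
    rw [hφ y, dotProduct, Finset.mul_sum, ← Finset.sum_sub_distrib]
  rw [hrw]
  apply HasFDerivAt.fun_sum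
  intro k _
  have h1 : HasFDerivAt (fun y : EuclideanSpace ℝ (Fin s) => y k)
      (EuclideanSpace.proj (𝕜 := ℝ) k) x := (EuclideanSpace.proj (𝕜 := ℝ) k).hasFDerivAt
  have h2 : HasFDerivAt (fun y : EuclideanSpace ℝ (Fin s) => (A *ᵥ (y : Fin s → ℝ)) k)
      (amk A k) x := (amk A k).hasFDerivAt
  have hmul := (h1.mul h2).const_mul (1 / 2 : ℝ)
  have hcomp := (logcosh_hasDerivAt ((A *ᵥ (x : Fin s → ℝ)) k)).comp_hasFDerivAt x h2
  exact hmul.sub hcomp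

lemma Dphi_hasFDerivAt :
    HasFDerivAt (Dphi A)
      (∑ k, ((1 / 2 : ℝ) • ((EuclideanSpace.proj (𝕜 := ℝ) k).smulRight (amk A k)
          + (amk A k).smulRight (EuclideanSpace.proj k))
        - ((1 : ℝ) • amk A k).smulRight (amk A k))) 0 := by
  apply HasFDerivAt.fun_sum
  intro k _
  have hlin1 : HasFDerivAt (fun x : EuclideanSpace ℝ (Fin s) => x k • amk A k)
      ((EuclideanSpace.proj (𝕜 := ℝ) k).smulRight (amk A k)) 0 :=
    ((EuclideanSpace.proj (𝕜 := ℝ) k).smulRight (amk A k)).hasFDerivAt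
  have hlin2 : HasFDerivAt (fun x : EuclideanSpace ℝ (Fin s) =>
        (A *ᵥ (x : Fin s → ℝ)) k • EuclideanSpace.proj (𝕜 := ℝ) k)
      ((amk A k).smulRight (EuclideanSpace.proj k)) 0 :=
    ((amk A k).smulRight (EuclideanSpace.proj k)).hasFDerivAt
  have hhalf := (hlin1.add hlin2).const_smul (1 / 2 : ℝ)
  have h0 : (A *ᵥ ((0 : EuclideanSpace ℝ (Fin s)) : Fin s → ℝ)) k = 0 := by
    rw [show ((0 : EuclideanSpace ℝ (Fin s)) : Fin s → ℝ) = 0 from rfl, Matrix.mulVec_zero]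
    rfl
  have htanh : HasDerivAt Real.tanh 1 ((A *ᵥ ((0 : EuclideanSpace ℝ (Fin s)) : Fin s → ℝ)) k) := by
    rw [h0]; exact tanh_hasDerivAt_zero
  have h2 : HasFDerivAt (fun y : EuclideanSpace ℝ (Fin s) => (A *ᵥ (y : Fin s → ℝ)) k)
      (amk A k) 0 := (amk A k).hasFDerivAt
  have hcomp := (htanh.comp_hasFDerivAt 0 h2).smul_const (amk A k)
  exact hhalf.sub hcomp

end

section
variable {s : ℕ}

lemma dot_mulVec_symm {A : Matrix (Fin s) (Fin s) ℝ} (hsym : Aᵀ = A) (u w : Fin s → ℝ) :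
    u ⬝ᵥ (A *ᵥ w) = (A *ᵥ u) ⬝ᵥ w := by
  rw [Matrix.dotProduct_mulVec]
  congr 1
  conv_lhs => rw [← hsym]
  rw [Matrix.vecMul_transpose]

theorem part1 (A : Matrix (Fin s) (Fin s) ℝ) (hsym : Aᵀ = A)
    (φ : EuclideanSpace ℝ (Fin s) → ℝ)
    (hφ : ∀ x : EuclideanSpace ℝ (Fin s),
      φ x = (1 / 2) * ((x : Fin s → ℝ) ⬝ᵥ A.mulVec x)
        - ∑ k, Real.log (Real.cosh (A.mulVec x k)))
    (u v : EuclideanSpace ℝ (Fin s)) :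
    iteratedFDeriv ℝ 2 φ 0 ![u, v] = (u : Fin s → ℝ) ⬝ᵥ (A - A * A).mulVec v := by
  have hfd : fderiv ℝ φ = Dphi A := funext fun x => (phi_hasFDerivAt A φ hφ x).fderiv
  rw [iteratedFDeriv_two_apply, hfd, (Dphi_hasFDerivAt A).fderiv]
  have hm0 : (![u, v] : Fin 2 → EuclideanSpace ℝ (Fin s)) 0 = u := rfl
  have hm1 : (![u, v] : Fin 2 → EuclideanSpace ℝ (Fin s)) 1 = v := rfl
  rw [hm0, hm1]
  simp only [ContinuousLinearMap.sum_apply, ContinuousLinearMap.sub_apply,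
    ContinuousLinearMap.add_apply, ContinuousLinearMap.smul_apply,
    ContinuousLinearMap.smulRight_apply, amk_apply, PiLp.proj_apply,
    one_smul, smul_eq_mul]
  have e1 : ∑ k, (A *ᵥ (u : Fin s → ℝ)) k * (v : Fin s → ℝ) k
      = (u : Fin s → ℝ) ⬝ᵥ (A *ᵥ (v : Fin s → ℝ)) := by
    rw [dot_mulVec_symm hsym]; rfl
  have e2 : ∑ k, (u : Fin s → ℝ) k * (A *ᵥ (v : Fin s → ℝ)) k
      = (u : Fin s → ℝ) ⬝ᵥ (A *ᵥ (v : Fin s → ℝ)) := rfl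
  have e3 : ∑ k, (A *ᵥ (u : Fin s → ℝ)) k * (A *ᵥ (v : Fin s → ℝ)) k
      = (u : Fin s → ℝ) ⬝ᵥ ((A * A) *ᵥ (v : Fin s → ℝ)) := by
    rw [← Matrix.mulVec_mulVec, dot_mulVec_symm hsym]; rfl
  rw [Finset.sum_sub_distrib, ← Finset.mul_sum, Finset.sum_add_distrib, e1, e2, e3,
    Matrix.sub_mulVec, dotProduct_sub]
  ring

end

end Aux

/-- The Hessian of `φ(x) = ½xᵀAx - ∑ₖ log cosh((Ax)ₖ)` at `x = 0` is `A - A²`, which is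
positive definite if `β + 2α < 1`, positive semidefinite if `β + 2α = 1`, and not positive
semidefinite if `β + 2α > 1`. -/
theorem stmt_10 (s : ℕ) (hs : 3 ≤ s) (α β : ℝ) (hα : 0 < α) (hβ : 2 * α < β)
    (A : Matrix (Fin s) (Fin s) ℝ) (hAdef : A = cyc s α β)
    (φ : EuclideanSpace ℝ (Fin s) → ℝ)
    (hφ : ∀ x : EuclideanSpace ℝ (Fin s),
      φ x = (1 / 2) * ((x : Fin s → ℝ) ⬝ᵥ A.mulVec x)
        - ∑ k, Real.log (Real.cosh (A.mulVec x k))) :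
    (∀ u v : EuclideanSpace ℝ (Fin s),
        iteratedFDeriv ℝ 2 φ 0 ![u, v] = (u : Fin s → ℝ) ⬝ᵥ (A - A * A).mulVec v) ∧
      (β + 2 * α < 1 → (A - A * A).PosDef) ∧
      (β + 2 * α = 1 → (A - A * A).PosSemidef) ∧
      (β + 2 * α > 1 → ¬ (A - A * A).PosSemidef) := by
  subst hAdef
  refine ⟨fun u v => part1 _ cyc_transpose φ hφ u v,
    fun h1 => sub_sq_posDef (cyc_posDef hs hα hβ) (one_sub_cyc_posDef hs hα h1),
    fun h1 => sub_sq_posSemidef (cyc_posDef hs hα hβ).posSemidef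
      (one_sub_cyc_posSemidef hs hα h1.le),
    fun h1 => cyc_not_posSemidef hs hα h1⟩
end

section
/- For $0 < r < 1$, integers $s \ge 1$ and $0 \le m < s$, the identity $\frac{1}{s}\sum_{l=0}^{s-1} \frac{e^{2\pi i l m / s}}{1 - 2r\cos(2\pi l/s) + r^2} = \frac{1}{1-r^2} \cdot \frac{r^m + r^{s-m}}{1 - r^s}$ holds. -/
open Complex Finset

private lemma aux_key_13 (s : ℕ) (hs : 1 ≤ s) (j : ℕ) :
    ∑ l ∈ Finset.range s, Complex.exp (2 * Real.pi * Complex.I / s) ^ (l * j)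
      = if s ∣ j then (s : ℂ) else 0 := by
  set ζ := Complex.exp (2 * Real.pi * Complex.I / s) with hζdef
  have hprim : IsPrimitiveRoot ζ s := Complex.isPrimitiveRoot_exp s (by omega)
  have hζs : ζ ^ s = 1 := hprim.pow_eq_one
  simp_rw [mul_comm, pow_mul]
  by_cases h : s ∣ j
  · obtain ⟨c, rfl⟩ := h
    simp [pow_mul, hζs, Finset.card_range]
  · rw [if_neg h]
    have hne : ζ ^ j ≠ 1 := fun H => h ((hprim.pow_eq_one_iff_dvd j).mp H)
    rw [geom_sum_eq hne]
    rw [← pow_mul, mul_comm j s, pow_mul, hζs, one_pow]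
    simp

private lemma aux_alg_13 (s m : ℕ) (R x y : ℂ) (hx : x ^ s = 1) (hxy : x * y = 1) :
    x ^ m * ((1 - R ^ 2) * (1 - R ^ s))
      = (∑ k ∈ Finset.range s, (R ^ k * x ^ (m + k) + R ^ (k + 1) * x ^ m * y ^ (k + 1)))
          * ((1 - R * x) * (1 - R * y)) := by
  have hy : y ^ s = 1 := by
    have h := mul_pow x y s
    rw [hxy, one_pow, hx, one_mul] at h
    exact h.symm
  have hrw : ∀ k, R ^ k * x ^ (m + k) + R ^ (k + 1) * x ^ m * y ^ (k + 1)
      = x ^ m * (R * x) ^ k + (x ^ m * (R * y)) * (R * y) ^ k := by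
    intro k
    rw [pow_add, pow_succ, pow_succ, mul_pow, mul_pow]
    ring
  rw [Finset.sum_congr rfl (fun k _ => hrw k), Finset.sum_add_distrib,
    ← Finset.mul_sum, ← Finset.mul_sum]
  have hS1 : (∑ i ∈ Finset.range s, (R * x) ^ i) * (1 - R * x) = 1 - R ^ s := by
    have h := geom_sum_mul (R * x) s
    have hx' : (R * x) ^ s = R ^ s := by rw [mul_pow, hx, mul_one]
    linear_combination -h - hx'
  have hS2 : (∑ i ∈ Finset.range s, (R * y) ^ i) * (1 - R * y) = 1 - R ^ s := by
    have h := geom_sum_mul (R * y) s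
    have hy' : (R * y) ^ s = R ^ s := by rw [mul_pow, hy, mul_one]
    linear_combination -h - hy'
  linear_combination (-(x ^ m * (1 - R * y))) * hS1 + (-(x ^ m * (R * y) * (1 - R * x))) * hS2 +
    (x ^ m * (1 - R ^ s) * R ^ 2) * hxy

/-- For `0 < r < 1`, `s ≥ 1` and `0 ≤ m < s`,
`(1/s) ∑_{l=0}^{s-1} e^{2πilm/s}/(1 - 2r cos(2πl/s) + r²) = (1/(1-r²)) (rᵐ + r^{s-m})/(1 - rˢ)`. -/
theorem stmt_13 (s : ℕ) (hs : 1 ≤ s) (m : ℕ) (hm : m < s) (r : ℝ) (hr0 : 0 < r) (hr1 : r < 1) :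
    (1 / (s : ℂ)) * ∑ l ∈ Finset.range s,
        Complex.exp (2 * Real.pi * Complex.I * l * m / s)
          / ((1 - 2 * r * Real.cos (2 * Real.pi * l / s) + r ^ 2 : ℝ) : ℂ)
      = ((1 / (1 - r ^ 2) * ((r ^ m + r ^ (s - m)) / (1 - r ^ s)) : ℝ) : ℂ) := by
  set R : ℂ := (r : ℂ) with hRdef
  set ζ : ℂ := Complex.exp (2 * Real.pi * Complex.I / s) with hζdef
  have hsne : (s : ℂ) ≠ 0 := Nat.cast_ne_zero.mpr (by omega)
  have hprim : IsPrimitiveRoot ζ s := Complex.isPrimitiveRoot_exp s (by omega)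
  have hζs : ζ ^ s = 1 := hprim.pow_eq_one
  have habsζ : ‖ζ‖ = 1 := by
    rw [hζdef, show (2 * (Real.pi : ℂ) * Complex.I / s) = ((2 * Real.pi / s : ℝ) : ℂ) * Complex.I
      by push_cast; ring, Complex.norm_exp_ofReal_mul_I]
  have hA : ∀ n : ℕ, (1 : ℂ) - R * ζ ^ n ≠ 0 := by
    intro n h
    rw [sub_eq_zero] at h
    have h2 := congrArg norm h
    rw [norm_one, norm_mul, norm_pow, habsζ, one_pow, mul_one, hRdef, Complex.norm_real,
      Real.norm_eq_abs, abs_of_pos hr0] at h2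
    linarith
  have hrs : r ^ s < 1 := pow_lt_one₀ hr0.le hr1 (by omega)
  have hr2 : r ^ 2 < 1 := pow_lt_one₀ hr0.le hr1 (by norm_num)
  have hD2 : (1 : ℂ) - R ^ 2 ≠ 0 := by
    intro h
    rw [sub_eq_zero, hRdef] at h
    have : (1 : ℝ) = r ^ 2 := by exact_mod_cast h
    linarith
  have hDs : (1 : ℂ) - R ^ s ≠ 0 := by
    intro h
    rw [sub_eq_zero, hRdef] at h
    have : (1 : ℝ) = r ^ s := by exact_mod_cast h
    linarith
  have hprod : ∀ l : ℕ, ζ ^ l * ζ ^ (l * (s - 1)) = 1 := by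
    intro l
    obtain ⟨t, rfl⟩ : ∃ t, s = t + 1 := ⟨s - 1, by omega⟩
    rw [← pow_add, Nat.add_sub_cancel, show l + l * t = (t + 1) * l by ring, pow_mul, hζs, one_pow]
  have hxs : ∀ l : ℕ, (ζ ^ l) ^ s = 1 := by
    intro l
    rw [← pow_mul, mul_comm, pow_mul, hζs, one_pow]
  have hnum : ∀ l : ℕ, Complex.exp (2 * Real.pi * Complex.I * l * m / s) = ζ ^ (l * m) := by
    intro l
    rw [hζdef, ← Complex.exp_nat_mul]
    congr 1
    push_cast
    ring
  have hden : ∀ l : ℕ, ((1 - 2 * r * Real.cos (2 * Real.pi * l / s) + r ^ 2 : ℝ) : ℂ)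
      = (1 - R * ζ ^ l) * (1 - R * ζ ^ (l * (s - 1))) := by
    intro l
    have hE : ζ ^ l = Complex.exp (((2 * Real.pi * l / s : ℝ) : ℂ) * Complex.I) := by
      rw [hζdef, ← Complex.exp_nat_mul]
      congr 1
      push_cast
      ring
    have hEE : Complex.exp (((2 * Real.pi * l / s : ℝ) : ℂ) * Complex.I)
        * Complex.exp (-((2 * Real.pi * l / s : ℝ) : ℂ) * Complex.I) = 1 := by
      rw [← Complex.exp_add]
      ring_nf
      exact Complex.exp_zero
    have hE' : ζ ^ (l * (s - 1))
        = Complex.exp (-((2 * Real.pi * l / s : ℝ) : ℂ) * Complex.I) := by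
      have h1 := hprod l
      rw [hE] at h1
      exact mul_left_cancel₀ (Complex.exp_ne_zero _) (h1.trans hEE.symm)
    have h2c := Complex.two_cos (((2 * Real.pi * l / s : ℝ) : ℂ))
    rw [hE, hE']
    push_cast
    push_cast at h2c hEE
    linear_combination (-R) * h2c - R ^ 2 * hEE
  -- step 1 : rewrite each summand
  have hterm : ∀ l ∈ Finset.range s,
      Complex.exp (2 * Real.pi * Complex.I * l * m / s)
          / ((1 - 2 * r * Real.cos (2 * Real.pi * l / s) + r ^ 2 : ℝ) : ℂ)
        = (∑ k ∈ Finset.range s, (R ^ k * ζ ^ (l * (m + k))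
            + R ^ (k + 1) * ζ ^ (l * (m + (s - 1) * (k + 1)))))
          / ((1 - R ^ 2) * (1 - R ^ s)) := by
    intro l _
    rw [hnum l, hden l,
      div_eq_div_iff (mul_ne_zero (hA l) (hA (l * (s - 1)))) (mul_ne_zero hD2 hDs)]
    have halg := aux_alg_13 s m R (ζ ^ l) (ζ ^ (l * (s - 1))) (hxs l) (hprod l)
    have hcv : ∀ k : ℕ, R ^ k * (ζ ^ l) ^ (m + k)
        + R ^ (k + 1) * (ζ ^ l) ^ m * (ζ ^ (l * (s - 1))) ^ (k + 1)
        = R ^ k * ζ ^ (l * (m + k)) + R ^ (k + 1) * ζ ^ (l * (m + (s - 1) * (k + 1))) := by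
      intro k
      rw [← pow_mul, ← pow_mul, ← pow_mul, mul_assoc, ← pow_add]
      congr 2
      ring
    rw [Finset.sum_congr rfl (fun k _ => hcv k)] at halg
    rw [← pow_mul] at halg
    exact halg
  rw [Finset.sum_congr rfl hterm, ← Finset.sum_div, Finset.sum_comm]
  -- inner sums over l
  have hinner : ∀ k ∈ Finset.range s,
      ∑ l ∈ Finset.range s, (R ^ k * ζ ^ (l * (m + k))
          + R ^ (k + 1) * ζ ^ (l * (m + (s - 1) * (k + 1))))
        = R ^ k * (if s ∣ (m + k) then (s : ℂ) else 0)
          + R ^ (k + 1) * (if s ∣ (m + (s - 1) * (k + 1)) then (s : ℂ) else 0) := by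
    intro k _
    rw [Finset.sum_add_distrib, ← Finset.mul_sum, ← Finset.mul_sum,
      aux_key_13 s hs (m + k), aux_key_13 s hs (m + (s - 1) * (k + 1))]
  rw [Finset.sum_congr rfl hinner, Finset.sum_add_distrib]
  -- evaluate the two sums
  set e1 : ℕ := if m = 0 then 0 else s - m with he1
  set e2 : ℕ := if m = 0 then s else m with he2
  have hnd1 : ∀ k, k < s → k ≠ e1 → ¬ s ∣ m + k := by
    intro k hk hne hdvd
    obtain ⟨c, hc⟩ := hdvd
    have hlt : s * c < s * 2 := lt_of_eq_of_lt hc.symm (by omega)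
    have hc2 : c < 2 := Nat.lt_of_mul_lt_mul_left hlt
    rw [he1] at hne
    interval_cases c
    · rw [Nat.mul_zero] at hc
      have hm0 : m = 0 := by omega
      rw [if_pos hm0] at hne
      omega
    · rw [Nat.mul_one] at hc
      by_cases hm0 : m = 0
      · rw [if_pos hm0] at hne
        omega
      · rw [if_neg hm0] at hne
        omega
  have hnd2 : ∀ k, k < s → k ≠ e2 - 1 → ¬ s ∣ m + (s - 1) * (k + 1) := by
    intro k hk hne hdvd
    obtain ⟨c, hc⟩ := hdvd
    have hc' : (m : ℤ) + ((s : ℤ) - 1) * (k + 1) = s * c := by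
      push_cast [Nat.cast_sub (show (1:ℕ) ≤ s from hs)] at hc
      exact_mod_cast hc
    have key : (k + 1 : ℤ) - m = s * ((k + 1 : ℤ) - c) := by linear_combination -hc'
    have hsZ : (1 : ℤ) ≤ s := by exact_mod_cast hs
    have hb1 : (k + 1 : ℤ) - m ≤ s := by
      have : (k : ℤ) < s := by exact_mod_cast hk
      omega
    have hb2 : -(s : ℤ) < (k + 1 : ℤ) - m := by
      have h1 : (m : ℤ) < s := by exact_mod_cast hm
      have h2 : (0 : ℤ) ≤ k := by positivity
      omega
    rw [key] at hb1 hb2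
    set d : ℤ := (k + 1 : ℤ) - c with hd
    have hd01 : d = 0 ∨ d = 1 := by
      rcases lt_trichotomy d 0 with h | h | h
      · exfalso; nlinarith
      · exact Or.inl h
      · have : d ≤ 1 := by nlinarith
        omega
    have hkm : (k + 1 : ℤ) - m = s * d := key
    rw [he2] at hne
    have h1 : (m : ℤ) < s := by exact_mod_cast hm
    have h2 : (k : ℤ) < s := by exact_mod_cast hk
    rcases hd01 with h0 | h0 <;> rw [h0] at hkm
    · rw [mul_zero] at hkm
      have hm0 : m ≠ 0 := by omega
      rw [if_neg hm0] at hne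
      omega
    · rw [mul_one] at hkm
      have hm0 : m = 0 := by omega
      rw [if_pos hm0] at hne
      omega
  have hsum1 : ∑ k ∈ Finset.range s, R ^ k * (if s ∣ (m + k) then (s : ℂ) else 0)
      = R ^ e1 * s := by
    rw [Finset.sum_eq_single_of_mem e1
      (Finset.mem_range.mpr (by rw [he1]; split <;> omega))]
    · rw [if_pos]
      by_cases hm0 : m = 0
      · rw [he1, if_pos hm0, hm0]
        simp
      · rw [he1, if_neg hm0, show m + (s - m) = s by omega]
    · intro k hk hne
      rw [if_neg (hnd1 k (Finset.mem_range.mp hk) hne), mul_zero]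
  have he2pos : 1 ≤ e2 := by rw [he2]; split <;> omega
  have hsum2 : ∑ k ∈ Finset.range s,
      R ^ (k + 1) * (if s ∣ (m + (s - 1) * (k + 1)) then (s : ℂ) else 0) = R ^ e2 * s := by
    rw [Finset.sum_eq_single_of_mem (e2 - 1)
      (Finset.mem_range.mpr (by rw [he2]; rw [he2] at he2pos; split <;> split at he2pos <;> omega))]
    · rw [show e2 - 1 + 1 = e2 by omega, if_pos]
      by_cases hm0 : m = 0
      · rw [he2, if_pos hm0, hm0, zero_add]
        exact dvd_mul_left s (s - 1)
      · rw [he2, if_neg hm0]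
        refine ⟨m, ?_⟩
        obtain ⟨t, rfl⟩ : ∃ t, s = t + 1 := ⟨s - 1, by omega⟩
        rw [Nat.add_sub_cancel]
        ring
    · intro k hk hne
      rw [if_neg (hnd2 k (Finset.mem_range.mp hk) hne), mul_zero]
  rw [hsum1, hsum2]
  push_cast
  rw [he1, he2]
  by_cases hm0 : m = 0
  · rw [if_pos hm0, if_pos hm0, hm0, Nat.sub_zero, pow_zero]
    rw [hRdef] at hD2 hDs ⊢
    field_simp
  · rw [if_neg hm0, if_neg hm0]
    rw [hRdef] at hD2 hDs ⊢
    field_simp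
    ring
end

section
/- Let $0 < 2\alpha < \beta$ with $\beta + 2\alpha < 1$, and set $\kappa = \frac{(1-\beta) - \sqrt{(1-\beta)^2 - 4\alpha^2}}{2\alpha}$. Then $0 < \kappa < 1$, and the entries of $(I - A)^{-1}$, where $A$ is the $s \times s$ cyclic nearest-neighbor matrix, are $((I-A)^{-1})_{j,k} = \frac{\kappa^{|j-k|} + \kappa^{s - |j-k|}}{(1 - \kappa^s)\sqrt{(1-\beta)^2 - 4\alpha^2}}$. -/
open Matrix

lemma fin_val_add_one' (s : ℕ) [NeZero s] (hs : 3 ≤ s) (i : Fin s) :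
    ((i + 1 : Fin s) : ℕ) = i.val + 1 ∨ (i.val = s - 1 ∧ ((i + 1 : Fin s) : ℕ) = 0) := by
  have h1 : ((1 : Fin s) : ℕ) = 1 := by
    rw [Fin.val_one']; exact Nat.mod_eq_of_lt (by omega)
  have := i.isLt
  rw [Fin.val_add, h1]
  rcases Nat.lt_or_ge (i.val + 1) s with h | h
  · left; exact Nat.mod_eq_of_lt h
  · right
    have he : i.val + 1 = s := by omega
    exact ⟨by omega, by rw [he, Nat.mod_self]⟩

lemma fin_val_sub_one' (s : ℕ) [NeZero s] (hs : 3 ≤ s) (i : Fin s) :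
    (1 ≤ i.val ∧ ((i - 1 : Fin s) : ℕ) = i.val - 1) ∨
      (i.val = 0 ∧ ((i - 1 : Fin s) : ℕ) = s - 1) := by
  have h1 : ((1 : Fin s) : ℕ) = 1 := by
    rw [Fin.val_one']; exact Nat.mod_eq_of_lt (by omega)
  have := i.isLt
  rw [Fin.sub_def, h1]
  simp only
  rcases Nat.eq_zero_or_pos i.val with h | h
  · right
    refine ⟨h, ?_⟩
    rw [h, Nat.add_zero]
    exact Nat.mod_eq_of_lt (by omega)
  · left
    refine ⟨h, ?_⟩
    have heq : s - 1 + i.val = s + (i.val - 1) := by omega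
    rw [heq, Nat.add_mod_left, Nat.mod_eq_of_lt (by omega)]

lemma cyc_entry' (s : ℕ) [NeZero s] (hs : 3 ≤ s) (α β : ℝ) (i j : Fin s) :
    (1 - cyc s α β) i j
      = if j = i then 1 - β else if j = i + 1 ∨ j = i - 1 then -α else 0 := by
  have hv1 := fin_val_add_one' s hs i
  have hv2 := fin_val_sub_one' s hs i
  have hp := (i + 1 : Fin s).isLt
  have hq := (i - 1 : Fin s).isLt
  simp only [Matrix.sub_apply, Matrix.one_apply, cyc, Matrix.of_apply]
  by_cases h0 : j = i
  · subst h0; simp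
  · have h0' : ¬ (i = j) := fun h => h0 h.symm
    rw [if_neg h0', if_neg h0']
    have hiff : (((i : ℤ) - (j : ℤ)).natAbs = 1 ∨ ((i : ℤ) - (j : ℤ)).natAbs = s - 1)
        ↔ (j = i + 1 ∨ j = i - 1) := by
      rw [Fin.ext_iff, Fin.ext_iff]
      have := i.isLt; have := j.isLt
      omega
    rw [if_congr hiff rfl rfl]
    split_ifs <;> ring

lemma cyc_mul_entry (s : ℕ) [NeZero s] (hs : 3 ≤ s) (α β : ℝ)
    (N : Matrix (Fin s) (Fin s) ℝ) (i k : Fin s) :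
    ((1 - cyc s α β) * N) i k
      = (1 - β) * N i k - α * N (i + 1) k - α * N (i - 1) k := by
  have hv1 := fin_val_add_one' s hs i
  have hv2 := fin_val_sub_one' s hs i
  have hp := (i + 1 : Fin s).isLt
  have hq := (i - 1 : Fin s).isLt
  have hiv := i.isLt
  have hne1 : i ≠ i + 1 := by
    intro h; have := congrArg Fin.val h; omega
  have hne2 : i ≠ i - 1 := by
    intro h; have := congrArg Fin.val h; omega
  have hne3 : (i + 1 : Fin s) ≠ i - 1 := by
    intro h; have := congrArg Fin.val h; omega
  rw [Matrix.mul_apply]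
  have hzero : ∀ x ∈ (Finset.univ : Finset (Fin s)),
      x ∉ ({i, i + 1, i - 1} : Finset (Fin s)) → (1 - cyc s α β) i x * N x k = 0 := by
    intro x _ hx
    simp only [Finset.mem_insert, Finset.mem_singleton, not_or] at hx
    rw [cyc_entry' s hs, if_neg hx.1, if_neg (by tauto)]
    ring
  rw [← Finset.sum_subset (Finset.subset_univ ({i, i + 1, i - 1} : Finset (Fin s))) hzero]
  have hm1 : i ∉ ({i + 1, i - 1} : Finset (Fin s)) := by
    simp only [Finset.mem_insert, Finset.mem_singleton]
    tauto
  have hm2 : (i + 1 : Fin s) ∉ ({i - 1} : Finset (Fin s)) := by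
    simp only [Finset.mem_singleton]
    exact hne3
  rw [Finset.sum_insert hm1, Finset.sum_insert hm2, Finset.sum_singleton]
  rw [cyc_entry' s hs α β i i, cyc_entry' s hs α β i (i + 1), cyc_entry' s hs α β i (i - 1)]
  rw [if_pos rfl, if_neg (Ne.symm hne1), if_pos (Or.inl rfl),
    if_neg (Ne.symm hne2), if_pos (Or.inr rfl)]
  ring

/-- For `0 < 2α < β` with `β + 2α < 1` and
`κ = ((1-β) - √((1-β)² - 4α²))/(2α)`, we have `0 < κ < 1` and
`((I - A)⁻¹)_{j,k} = (κ^{|j-k|} + κ^{s-|j-k|})/((1 - κˢ)√((1-β)² - 4α²))`. -/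
theorem stmt_15 (s : ℕ) (hs : 3 ≤ s) (α β : ℝ) (hα : 0 < α) (hβ : 2 * α < β)
    (hc : β + 2 * α < 1) (κ : ℝ)
    (hκ : κ = ((1 - β) - Real.sqrt ((1 - β) ^ 2 - 4 * α ^ 2)) / (2 * α)) :
    0 < κ ∧ κ < 1 ∧
      ∀ j k : Fin s,
        ((1 - cyc s α β)⁻¹) j k
          = (κ ^ ((j : ℤ) - (k : ℤ)).natAbs + κ ^ (s - ((j : ℤ) - (k : ℤ)).natAbs))
            / ((1 - κ ^ s) * Real.sqrt ((1 - β) ^ 2 - 4 * α ^ 2)) := by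
  haveI : NeZero s := ⟨by omega⟩
  set D := Real.sqrt ((1 - β) ^ 2 - 4 * α ^ 2) with hD
  have hargpos : (0:ℝ) < (1 - β) ^ 2 - 4 * α ^ 2 := by nlinarith
  have hDpos : 0 < D := Real.sqrt_pos.mpr hargpos
  have hD2 : D ^ 2 = (1 - β) ^ 2 - 4 * α ^ 2 := Real.sq_sqrt hargpos.le
  have hDlt : D < 1 - β := by nlinarith
  have hκpos : 0 < κ := by rw [hκ]; apply div_pos <;> linarith
  have h2ακ : 2 * α * κ = (1 - β) - D := by rw [hκ]; field_simp
  have key1 : (1 - β) * κ = α * (1 + κ ^ 2) := by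
    have h4 : 4 * α * ((1 - β) * κ) = 4 * α * (α * (1 + κ ^ 2)) := by
      nlinarith [hD2, h2ακ]
    exact mul_left_cancel₀ (by positivity) h4
  have key2 : α * (1 - κ ^ 2) = D * κ := by linear_combination -key1 - κ * h2ακ
  have hDgt : 1 - β - 2 * α < D := by nlinarith
  have hκlt1 : κ < 1 := by rw [hκ, div_lt_one (by linarith)]; linarith
  refine ⟨hκpos, hκlt1, ?_⟩
  have hκs : κ ^ s < 1 := pow_lt_one₀ hκpos.le hκlt1 (by omega)
  have hC : (1 - κ ^ s) * D ≠ 0 := by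
    have : 0 < (1 - κ ^ s) * D := mul_pos (by linarith) hDpos
    exact this.ne'
  -- the recurrence for interior distances
  have rec1 : ∀ d : ℕ, 1 ≤ d → d ≤ s - 1 →
      (1 - β) * (κ ^ d + κ ^ (s - d))
        = α * (κ ^ (d + 1) + κ ^ (s - (d + 1))) + α * (κ ^ (d - 1) + κ ^ (s - (d - 1))) := by
    intro d h1 h2
    obtain ⟨e, rfl⟩ : ∃ e, d = e + 1 := ⟨d - 1, by omega⟩
    obtain ⟨t, ht⟩ : ∃ t, s = e + 2 + t := ⟨s - e - 2, by omega⟩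
    rw [show s - (e + 1) = t + 1 from by omega,
      show s - (e + 1 + 1) = t from by omega,
      show e + 1 - 1 = e from by omega,
      show s - e = t + 2 from by omega]
    linear_combination (κ ^ e + κ ^ t) * key1
  -- the diagonal identity
  have rec0 : (1 - β) * (1 + κ ^ s) - α * (κ ^ 1 + κ ^ (s - 1)) - α * (κ ^ 1 + κ ^ (s - 1))
      = (1 - κ ^ s) * D := by
    rw [show s = (s - 1) + 1 from by omega, show (s - 1) + 1 - 1 = s - 1 from by omega]
    have hk : κ * ((1 - β) * (1 + κ ^ (s - 1 + 1)) - α * (κ ^ 1 + κ ^ (s - 1))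
          - α * (κ ^ 1 + κ ^ (s - 1)))
        = κ * ((1 - κ ^ (s - 1 + 1)) * D) := by
      linear_combination (1 + κ ^ (s - 1 + 1)) * key1 + (1 - κ ^ (s - 1 + 1)) * key2
    exact mul_left_cancel₀ hκpos.ne' hk
  set B : Matrix (Fin s) (Fin s) ℝ := Matrix.of fun j k =>
    (κ ^ ((j : ℤ) - (k : ℤ)).natAbs + κ ^ (s - ((j : ℤ) - (k : ℤ)).natAbs))
      / ((1 - κ ^ s) * D) with hB
  have hmul : (1 - cyc s α β) * B = 1 := by
    ext i k
    rw [cyc_mul_entry s hs α β B i k]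
    simp only [hB, Matrix.of_apply, Matrix.one_apply]
    set d := ((i : ℤ) - (k : ℤ)).natAbs with hd
    set d1 := (((i + 1 : Fin s) : ℤ) - (k : ℤ)).natAbs with hd1
    set d2 := (((i - 1 : Fin s) : ℤ) - (k : ℤ)).natAbs with hd2
    have hv1 := fin_val_add_one' s hs i
    have hv2 := fin_val_sub_one' s hs i
    have hp := (i + 1 : Fin s).isLt
    have hq := (i - 1 : Fin s).isLt
    have hiv := i.isLt
    have hkv := k.isLt
    by_cases hik : i = k
    · subst hik
      have hd0 : d = 0 := by simp [hd]
      have hcase1 : d1 = 1 ∨ d1 = s - 1 := by omega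
      have hcase2 : d2 = 1 ∨ d2 = s - 1 := by omega
      have hg1 : κ ^ d1 + κ ^ (s - d1) = κ ^ 1 + κ ^ (s - 1) := by
        rcases hcase1 with h | h
        · rw [h]
        · rw [h, show s - (s - 1) = 1 from by omega]; ring
      have hg2 : κ ^ d2 + κ ^ (s - d2) = κ ^ 1 + κ ^ (s - 1) := by
        rcases hcase2 with h | h
        · rw [h]
        · rw [h, show s - (s - 1) = 1 from by omega]; ring
      rw [hd0, hg1, hg2, if_pos rfl]
      rw [show (1 - β) * ((κ ^ 0 + κ ^ (s - 0)) / ((1 - κ ^ s) * D))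
            - α * ((κ ^ 1 + κ ^ (s - 1)) / ((1 - κ ^ s) * D))
            - α * ((κ ^ 1 + κ ^ (s - 1)) / ((1 - κ ^ s) * D))
          = ((1 - β) * (κ ^ 0 + κ ^ (s - 0)) - α * (κ ^ 1 + κ ^ (s - 1))
              - α * (κ ^ 1 + κ ^ (s - 1))) / ((1 - κ ^ s) * D) from by ring]
      rw [div_eq_one_iff_eq hC]
      rw [show s - 0 = s from by omega, pow_zero]
      exact rec0
    · have hne : i.val ≠ k.val := fun h => hik (Fin.ext h)
      have hd1' : 1 ≤ d := by omega
      have hdle : d ≤ s - 1 := by omega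
      have hcase : (d2 = d - 1 ∧ (d1 = d + 1 ∨ d1 = s - (d + 1)))
          ∨ (d1 = d - 1 ∧ (d2 = d + 1 ∨ d2 = s - (d + 1))) := by omega
      have hsum : (κ ^ d1 + κ ^ (s - d1)) + (κ ^ d2 + κ ^ (s - d2))
          = (κ ^ (d + 1) + κ ^ (s - (d + 1))) + (κ ^ (d - 1) + κ ^ (s - (d - 1))) := by
        have hwrap : κ ^ (s - (d + 1)) + κ ^ (s - (s - (d + 1)))
            = κ ^ (d + 1) + κ ^ (s - (d + 1)) := by
          rw [show s - (s - (d + 1)) = d + 1 from by omega]; ring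
        rcases hcase with ⟨h2, h1 | h1⟩ | ⟨h1, h2 | h2⟩
        · rw [h1, h2]
        · rw [h1, h2]; linear_combination hwrap
        · rw [h1, h2]; ring
        · rw [h1, h2]; linear_combination hwrap
      rw [if_neg hik]
      rw [show (1 - β) * ((κ ^ d + κ ^ (s - d)) / ((1 - κ ^ s) * D))
            - α * ((κ ^ d1 + κ ^ (s - d1)) / ((1 - κ ^ s) * D))
            - α * ((κ ^ d2 + κ ^ (s - d2)) / ((1 - κ ^ s) * D))
          = ((1 - β) * (κ ^ d + κ ^ (s - d)) - α * ((κ ^ d1 + κ ^ (s - d1))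
              + (κ ^ d2 + κ ^ (s - d2)))) / ((1 - κ ^ s) * D) from by ring]
      rw [div_eq_zero_iff]
      left
      rw [hsum]
      linear_combination rec1 d hd1' hdle
  have hinv : (1 - cyc s α β)⁻¹ = B := Matrix.inv_eq_right_inv hmul
  intro j k
  rw [hinv]
  simp [hB]
end

section
/- Let $\beta + 2\alpha > 1$ with $\beta > 2\alpha > 0$. If $x \in \mathbb{R}^s$ satisfies $x_k = \tanh(\beta x_k + \alpha(x_{k-1} + x_{k+1}))$ for all $k$ (cyclic indices) and all coordinates of $x$ are strictly positive, then $x_k = m^*$ for all $k$, where $m^*$ is the unique positive solution of $m = \tanh((\beta+2\alpha)m)$. -/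
lemma hasDerivAt_tanh' (x : ℝ) : HasDerivAt Real.tanh (1 / Real.cosh x ^ 2) x := by
  have h : HasDerivAt (fun y => Real.sinh y / Real.cosh y)
      ((Real.cosh x * Real.cosh x - Real.sinh x * Real.sinh x) / Real.cosh x ^ 2) x :=
    (Real.hasDerivAt_sinh x).div (Real.hasDerivAt_cosh x) (Real.cosh_pos x).ne'
  have hc : (Real.cosh x * Real.cosh x - Real.sinh x * Real.sinh x) = 1 := by
    nlinarith [Real.cosh_sq_sub_sinh_sq x]
  have : Real.tanh = fun y => Real.sinh y / Real.cosh y := by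
    funext y; exact Real.tanh_eq_sinh_div_cosh y
  rw [this, ← hc]; exact h

lemma tanh_strictMono : StrictMono Real.tanh := by
  apply strictMono_of_deriv_pos
  intro x
  rw [(hasDerivAt_tanh' x).deriv]
  positivity

lemma tanh_div_strictAntiOn : StrictAntiOn (fun t => Real.tanh t / t) (Set.Ioi (0:ℝ)) := by
  apply strictAntiOn_of_deriv_neg (convex_Ioi 0)
  · apply ContinuousOn.div
    · exact fun t _ => (hasDerivAt_tanh' t).continuousAt.continuousWithinAt
    · exact continuousOn_id
    · intro t ht; exact (Set.mem_Ioi.mp ht).ne'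
  · intro t ht
    rw [interior_Ioi, Set.mem_Ioi] at ht
    have h : HasDerivAt (fun t => Real.tanh t / t)
        ((1 / Real.cosh t ^ 2 * t - Real.tanh t * 1) / t ^ 2) t :=
      (hasDerivAt_tanh' t).div (hasDerivAt_id t) ht.ne'
    rw [h.deriv]
    apply div_neg_of_neg_of_pos _ (by positivity)
    have hst : t < Real.sinh t := Real.self_lt_sinh_iff.mpr ht
    have hc1 : 1 ≤ Real.cosh t := Real.one_le_cosh t
    have hsp : 0 < Real.sinh t := Real.sinh_pos_iff.mpr ht
    have hcp : 0 < Real.cosh t := Real.cosh_pos t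
    have : t < Real.sinh t * Real.cosh t := by nlinarith
    rw [Real.tanh_eq_sinh_div_cosh]
    rw [sub_neg, mul_one, div_mul_eq_mul_div, div_lt_div_iff₀ (by positivity) hcp]
    nlinarith

/-- For `β > 2α > 0` with `β + 2α > 1`: any solution of the cyclic fixed-point system
`xₖ = tanh(βxₖ + α(xₖ₋₁ + xₖ₊₁))` with all coordinates strictly positive is the constant
vector `m*`, where `m*` is the unique positive solution of `m = tanh((β+2α)m)`. -/
theorem stmt_17 (s : ℕ) [NeZero s] (hs : 3 ≤ s) (α β : ℝ) (hα : 0 < α) (hβ : 2 * α < β)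
    (hlow : 1 < β + 2 * α) (m : ℝ) (hm : m ∈ Set.Ioo (0 : ℝ) 1)
    (hfix : m = Real.tanh ((β + 2 * α) * m))
    (huniq : ∀ m' : ℝ, 0 < m' → m' = Real.tanh ((β + 2 * α) * m') → m' = m)
    (x : Fin s → ℝ) (hpos : ∀ k, 0 < x k)
    (hx : ∀ k, x k = Real.tanh (β * x k + α * (x (k - 1) + x (k + 1)))) :
    ∀ k, x k = m := by
  have hsne : (Finset.univ : Finset (Fin s)).Nonempty := Finset.univ_nonempty
  obtain ⟨k0, -, hk0⟩ := Finset.exists_max_image Finset.univ x hsne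
  obtain ⟨j0, -, hj0⟩ := Finset.exists_min_image Finset.univ x hsne
  set c : ℝ := β + 2 * α with hc
  set M := x k0 with hM
  set N := x j0 with hN
  have hMpos : 0 < M := hpos k0
  have hNpos : 0 < N := hpos j0
  have hcpos : (0:ℝ) < c := by linarith
  have hMle : M ≤ Real.tanh (c * M) := by
    have h1 := hk0 (k0 - 1) (Finset.mem_univ _)
    have h2 := hk0 (k0 + 1) (Finset.mem_univ _)
    have harg : β * M + α * (x (k0 - 1) + x (k0 + 1)) ≤ c * M := by
      rw [hc]; nlinarith
    calc M = Real.tanh (β * M + α * (x (k0 - 1) + x (k0 + 1))) := hx k0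
    _ ≤ Real.tanh (c * M) := tanh_strictMono.monotone harg
  have hNge : Real.tanh (c * N) ≤ N := by
    have h1 := hj0 (j0 - 1) (Finset.mem_univ _)
    have h2 := hj0 (j0 + 1) (Finset.mem_univ _)
    have harg : c * N ≤ β * N + α * (x (j0 - 1) + x (j0 + 1)) := by
      rw [hc]; nlinarith
    calc Real.tanh (c * N) ≤ Real.tanh (β * N + α * (x (j0 - 1) + x (j0 + 1))) :=
      tanh_strictMono.monotone harg
    _ = N := (hx j0).symm
  have hMN : N ≤ M := hj0 k0 (Finset.mem_univ _)
  have heq : N = M := by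
    by_contra hne
    have hlt : N < M := lt_of_le_of_ne hMN hne
    have key := tanh_div_strictAntiOn (Set.mem_Ioi.mpr (by positivity : (0:ℝ) < c * N))
      (Set.mem_Ioi.mpr (by positivity : (0:ℝ) < c * M))
      (by nlinarith : c * N < c * M)
    simp only at key
    rw [div_lt_div_iff₀ (by positivity) (by positivity)] at key
    nlinarith [mul_pos hcpos hNpos, mul_pos hcpos hMpos]
  have hall : ∀ k, x k = M := fun k =>
    le_antisymm (hk0 k (Finset.mem_univ _)) (heq ▸ hj0 k (Finset.mem_univ _))
  have hMfix : M = Real.tanh (c * M) := by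
    have h := hx k0
    rw [hall (k0 - 1), hall (k0 + 1)] at h
    have harg : β * x k0 + α * (M + M) = c * M := by rw [hc, ← hM]; ring
    rw [harg] at h; exact h
  intro k
  rw [hall k, huniq M hMpos hMfix]
end
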